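/- Let d ≥ 1 and let φ ∈ ℂ^{(Fin d)×(Fin d)} be the maximally entangled unit vector φ(i,j) = (1/√d) if i = j and 0 otherwise. For every real λ > 1, the infimum over positive definite density matrices σ indexed by Fin d of D_λ( |φ⟩⟨φ| ‖ 1⊗σ ) equals ln d. In particular Tr[ (Tr_A(|φ⟩⟨φ|^λ))^{1/λ} ] = d^{(λ−1)/λ}. -/

import Mathlib

open scoped Kronecker
open Matrix
open scoped ComplexOrder

/-- Apply a real function to a Hermitian matrix via the functional calculus
(spectral decomposition); returns 0 for non-Hermitian input. -/
noncomputable def matFun {n : Type*} [Fintype n] [DecidableEq n]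
    (M : Matrix n n ℂ) (f : ℝ → ℝ) : Matrix n n ℂ :=
  if h : M.IsHermitian then
    (h.eigenvectorUnitary : Matrix n n ℂ) *
      Matrix.diagonal (fun i => (f (h.eigenvalues i) : ℂ)) *
      (star (h.eigenvectorUnitary : Matrix n n ℂ))
  else 0

/-- Real power of a (Hermitian positive semidefinite) matrix, with the
convention `0 ^ t = 0` for every real `t`. -/
noncomputable def mpow {n : Type*} [Fintype n] [DecidableEq n]
    (M : Matrix n n ℂ) (t : ℝ) : Matrix n n ℂ :=
  matFun M (fun x => if x = 0 then 0 else x ^ t)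

/-- Real part of the trace. -/
noncomputable def trR {n : Type*} [Fintype n] (M : Matrix n n ℂ) : ℝ :=
  (Matrix.trace M).re

/-- Partial trace over the first tensor factor. -/
noncomputable def ptrA {A B : Type*} [Fintype A]
    (M : Matrix (A × B) (A × B) ℂ) : Matrix B B ℂ :=
  Matrix.of fun b b' => ∑ a : A, M (a, b) (a, b')

/-- Quantum Rényi divergence of order `lam`. -/
noncomputable def renyiD {n : Type*} [Fintype n] [DecidableEq n]
    (lam : ℝ) (X Y : Matrix n n ℂ) : ℝ :=
  (1 / (lam - 1)) * Real.log (trR (mpow X lam * mpow Y (1 - lam)))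

/-- The quantity `K_lam(A⟩B)_ρ`: infimum over positive definite density
matrices `σ` on `B` of `D_lam(ρ ‖ 1_A ⊗ σ)`. -/
noncomputable def Kinf {A B : Type*} [Fintype A] [Fintype B]
    [DecidableEq A] [DecidableEq B]
    (lam : ℝ) (ρ : Matrix (A × B) (A × B) ℂ) : ℝ :=
  ⨅ σ : {σ : Matrix B B ℂ // σ.PosDef ∧ σ.trace = 1},
    renyiD lam ρ ((1 : Matrix A A ℂ) ⊗ₖ (σ : Matrix B B ℂ))

/-- The CPTP map determined by a finite family of Kraus operators. -/
noncomputable def krausMap {ι n m : Type*} [Fintype ι] [Fintype n] [Fintype m]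
    (K : ι → Matrix m n ℂ) (X : Matrix n n ℂ) : Matrix m m ℂ :=
  ∑ j, K j * X * (K j)ᴴ

/-- Trace of the positive part of a Hermitian matrix. -/
noncomputable def trPos {n : Type*} [Fintype n] [DecidableEq n]
    (X : Matrix n n ℂ) : ℝ :=
  if h : X.IsHermitian then ∑ i, max (h.eigenvalues i) 0 else 0

/-- Binary Rényi quantity `𝔻_lam(α‖β)`. -/
noncomputable def binD (lam α β : ℝ) : ℝ :=
  (1 / (lam - 1)) *
    Real.log (α ^ lam * β ^ (1 - lam) + (1 - α) ^ lam * (β⁻¹ - β) ^ (1 - lam))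

/-! `|φ⟩⟨φ|` is a rank-one projection, so every power of it is itself and
`D_λ(|φ⟩⟨φ| ‖ N) = (λ - 1)⁻¹ ln ⟨φ, N^{1-λ} φ⟩`. Expanding `φ` in an eigenbasis of `N`,
Jensen's inequality for the convex function `x ↦ x^{1-λ}` gives
`⟨φ, N^{1-λ} φ⟩ ≥ ⟨φ, N φ⟩^{1-λ}`, hence `D_λ(|φ⟩⟨φ| ‖ N) ≥ -ln ⟨φ, N φ⟩`.
For `N = 1 ⊗ σ` one has `⟨φ, (1 ⊗ σ) φ⟩ = Tr(Tr_A |φ⟩⟨φ| · σ)`, and the reduced state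
of the maximally entangled vector is `1/d`, so `⟨φ, (1 ⊗ σ) φ⟩ = 1/d` and `D_λ ≥ ln d`,
with equality at `σ = 1/d`. The second claim is `Tr[(1/d)^{1/λ}] = d · d^{-1/λ}`. -/

namespace Real

theorem one_add_mul_self_le_rpow_one_add_of_nonpos {s : ℝ} (hs : -1 < s) {p : ℝ} (hp : p ≤ 0) :
    1 + p * s ≤ (1 + s) ^ p := by
  set y := 1 + s
  have hy : 0 < y := by linarith
  -- Bernoulli's inequality for the exponent `1 - p ≥ 1` at the point `1 / y`
  have hbern := one_add_mul_self_le_rpow_one_add (s := y⁻¹ - 1) (by linarith [inv_pos.2 hy])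
    (by linarith : 1 ≤ 1 - p)
  rw [add_sub_cancel, inv_rpow hy.le, ← rpow_neg hy.le, neg_sub] at hbern
  calc 1 + p * s = y * (1 + (1 - p) * (y⁻¹ - 1)) := by field_simp; ring
    _ ≤ y * y ^ (p - 1) := by gcongr
    _ = y ^ p := by rw [mul_comm, ← rpow_add_one hy.ne', sub_add_cancel]

theorem rpow_arith_mean_le_arith_mean_rpow_of_nonpos {ι : Type*} (s : Finset ι) (w z : ι → ℝ)
    (hw : ∀ i ∈ s, 0 ≤ w i) (hw' : ∑ i ∈ s, w i = 1) (hz : ∀ i ∈ s, 0 < z i) {p : ℝ}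
    (hp : p ≤ 0) :
    (∑ i ∈ s, w i * z i) ^ p ≤ ∑ i ∈ s, w i * z i ^ p := by
  set m := ∑ i ∈ s, w i * z i
  have hm : 0 < m := by
    obtain ⟨j, hj, hwj⟩ : ∃ j ∈ s, 0 < w j := by
      by_contra! h
      linarith [Finset.sum_nonpos h]
    exact Finset.sum_pos' (fun i hi => mul_nonneg (hw i hi) (hz i hi).le)
      ⟨j, hj, mul_pos hwj (hz j hj)⟩
  have htangent_mean : ∑ i ∈ s, w i * (1 + p * (z i / m - 1)) = 1 := by
    have : ∑ i ∈ s, w i * (1 + p * (z i / m - 1)) = (1 - p) * ∑ i ∈ s, w i + p / m * m := by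
      rw [Finset.mul_sum, Finset.mul_sum, ← Finset.sum_add_distrib]
      exact Finset.sum_congr rfl fun i _ => by ring
    rw [this, hw', div_mul_cancel₀ _ hm.ne']
    ring
  calc m ^ p = m ^ p * ∑ i ∈ s, w i * (1 + p * (z i / m - 1)) := by rw [htangent_mean, mul_one]
    _ ≤ m ^ p * ∑ i ∈ s, w i * (z i / m) ^ p := by
      gcongr with i hi
      · exact hw i hi
      · have := one_add_mul_self_le_rpow_one_add_of_nonpos
          (by linarith [div_pos (hz i hi) hm] : -1 < z i / m - 1) hp
        rwa [add_sub_cancel] at this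
    _ = ∑ i ∈ s, w i * z i ^ p := by
      rw [Finset.mul_sum]
      refine Finset.sum_congr rfl fun i hi => ?_
      rw [div_rpow (hz i hi).le hm.le]
      field_simp [(rpow_pos_of_pos hm p).ne']

end Real

theorem IsIdempotentElem.cfc_eq_self {A : Type*} [TopologicalSpace A] [Ring A] [StarRing A]
    [Algebra ℝ A] [ContinuousFunctionalCalculus ℝ A IsSelfAdjoint] {a : A}
    (ha : IsIdempotentElem a) (ha' : IsSelfAdjoint a) {f : ℝ → ℝ} (h0 : f 0 = 0)
    (h1 : f 1 = 1) :
    cfc f a = a := by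
  calc cfc f a = cfc id a := cfc_congr fun x hx => by
        rcases ha.spectrum_subset ℝ hx with rfl | rfl
        exacts [h0, h1]
    _ = a := cfc_id ℝ a

section FunctionalCalculus

variable {n : Type*} [Fintype n] [DecidableEq n]

theorem matFun_eq_cfc {M : Matrix n n ℂ} (hM : M.IsHermitian) (f : ℝ → ℝ) :
    matFun M f = cfc f M := by
  rw [matFun, dif_pos hM, hM.cfc_eq, IsHermitian.cfc, Unitary.conjStarAlgAut_apply]
  rfl

theorem mpow_eq_cfc_rpow {M : Matrix n n ℂ} (hM : M.IsHermitian) {t : ℝ} (ht : t ≠ 0) :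
    mpow M t = cfc (fun x : ℝ => x ^ t) M := by
  rw [mpow, matFun_eq_cfc hM]
  congr 1
  funext x
  split_ifs with hx
  · rw [hx, Real.zero_rpow ht]
  · rfl

theorem mpow_ofReal_smul_one {c : ℝ} (hc : c ≠ 0) (t : ℝ) :
    mpow ((c : ℂ) • (1 : Matrix n n ℂ)) t = ((c ^ t : ℝ) : ℂ) • 1 := by
  have halg (r : ℝ) : (r : ℂ) • (1 : Matrix n n ℂ) = algebraMap ℝ (Matrix n n ℂ) r := by
    rw [Algebra.algebraMap_eq_smul_one, ← Complex.coe_smul]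
  rw [halg, halg, mpow,
    matFun_eq_cfc (IsSelfAdjoint.algebraMap (Matrix n n ℂ) (.all c)).isHermitian,
    cfc_algebraMap, if_neg hc]

end FunctionalCalculus

section PureState

variable {n : Type*} [Fintype n]

theorem trace_vecMulVec_star_mul (φ : n → ℂ) (M : Matrix n n ℂ) :
    (vecMulVec φ (star φ) * M).trace = star φ ⬝ᵥ (M *ᵥ φ) := by
  rw [trace_mul_comm, mul_vecMulVec, trace_vecMulVec, dotProduct_comm]

theorem re_trace_vecMulVec_star_mul_pos {φ : n → ℂ} (hφ : star φ ⬝ᵥ φ = 1)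
    {N : Matrix n n ℂ} (hN : N.PosDef) : 0 < (vecMulVec φ (star φ) * N).trace.re := by
  have hφ0 : φ ≠ 0 := by rintro rfl; simp at hφ
  rw [trace_vecMulVec_star_mul]
  exact (Complex.pos_iff.mp (hN.dotProduct_mulVec_pos hφ0)).1

theorem isIdempotentElem_vecMulVec_star {φ : n → ℂ} (hφ : star φ ⬝ᵥ φ = 1) :
    IsIdempotentElem (vecMulVec φ (star φ)) := by
  rw [IsIdempotentElem, vecMulVec_mul_vecMulVec, hφ, one_smul]

variable [DecidableEq n]

theorem re_trace_vecMulVec_star_mul_cfc (φ : n → ℂ) {N : Matrix n n ℂ} (hN : N.IsHermitian)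
    (f : ℝ → ℝ) :
    (vecMulVec φ (star φ) * cfc f N).trace.re =
      ∑ i, Complex.normSq ((star (hN.eigenvectorUnitary : Matrix n n ℂ) *ᵥ φ) i) *
        f (hN.eigenvalues i) := by
  rw [trace_vecMulVec_star_mul, hN.cfc_eq, IsHermitian.cfc, Unitary.conjStarAlgAut_apply,
    ← mulVec_mulVec, ← mulVec_mulVec, dotProduct_mulVec]
  have hψ : star φ ᵥ* (hN.eigenvectorUnitary : Matrix n n ℂ) =
      star (star (hN.eigenvectorUnitary : Matrix n n ℂ) *ᵥ φ) := by
    rw [star_mulVec, star_eq_conjTranspose, conjTranspose_conjTranspose]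
  rw [hψ]
  generalize star (hN.eigenvectorUnitary : Matrix n n ℂ) *ᵥ φ = ψ
  simp only [dotProduct, mulVec_diagonal, Pi.star_apply, Function.comp_apply, Complex.re_sum]
  refine Finset.sum_congr rfl fun i _ => ?_
  simp [Complex.normSq_apply]
  ring

theorem rpow_re_trace_le_re_trace_cfc_rpow {φ : n → ℂ} (hφ : star φ ⬝ᵥ φ = 1)
    {N : Matrix n n ℂ} (hN : N.PosDef) {p : ℝ} (hp : p ≤ 0) :
    (vecMulVec φ (star φ) * N).trace.re ^ p ≤
      (vecMulVec φ (star φ) * cfc (fun x : ℝ => x ^ p) N).trace.re := by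
  have hw := re_trace_vecMulVec_star_mul_cfc φ hN.isHermitian fun _ => 1
  have hmean := re_trace_vecMulVec_star_mul_cfc φ hN.isHermitian id
  rw [cfc_const_one ℝ N hN.isHermitian.isSelfAdjoint, mul_one, trace_vecMulVec,
    dotProduct_comm, hφ] at hw
  rw [cfc_id ℝ N hN.isHermitian.isSelfAdjoint] at hmean
  rw [hmean, re_trace_vecMulVec_star_mul_cfc φ hN.isHermitian]
  exact Real.rpow_arith_mean_le_arith_mean_rpow_of_nonpos _ _ _
    (fun i _ => Complex.normSq_nonneg _) (by simpa using hw.symm)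
    (fun i _ => hN.eigenvalues_pos i) hp

theorem mpow_vecMulVec_star {φ : n → ℂ} (hφ : star φ ⬝ᵥ φ = 1) (t : ℝ) :
    mpow (vecMulVec φ (star φ)) t = vecMulVec φ (star φ) := by
  have hρ := (posSemidef_vecMulVec_self_star φ).isHermitian
  rw [mpow, matFun_eq_cfc hρ]
  exact (isIdempotentElem_vecMulVec_star hφ).cfc_eq_self hρ (by simp) (by simp)

theorem neg_log_le_renyiD_vecMulVec_star {φ : n → ℂ} (hφ : star φ ⬝ᵥ φ = 1)
    {N : Matrix n n ℂ} (hN : N.PosDef) {lam : ℝ} (hlam : 1 < lam) :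
    -Real.log (trR (vecMulVec φ (star φ) * N)) ≤ renyiD lam (vecMulVec φ (star φ)) N := by
  have hm : 0 < trR (vecMulVec φ (star φ) * N) := re_trace_vecMulVec_star_mul_pos hφ hN
  have hjensen : trR (vecMulVec φ (star φ) * N) ^ (1 - lam) ≤
      trR (vecMulVec φ (star φ) * mpow N (1 - lam)) := by
    rw [mpow_eq_cfc_rpow hN.isHermitian (by linarith)]
    exact rpow_re_trace_le_re_trace_cfc_rpow hφ hN (by linarith)
  have hlam' : 0 < lam - 1 := by linarith
  rw [renyiD, mpow_vecMulVec_star hφ]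
  calc -Real.log (trR (vecMulVec φ (star φ) * N))
      = 1 / (lam - 1) * Real.log (trR (vecMulVec φ (star φ) * N) ^ (1 - lam)) := by
        rw [Real.log_rpow hm]
        field_simp
        ring
    _ ≤ _ := by gcongr

theorem renyiD_vecMulVec_star_ofReal_smul_one {φ : n → ℂ} (hφ : star φ ⬝ᵥ φ = 1)
    {lam : ℝ} (hlam : lam ≠ 1) {c : ℝ} (hc : 0 < c) :
    renyiD lam (vecMulVec φ (star φ)) ((c : ℂ) • 1) = -Real.log c := by
  rw [renyiD, mpow_vecMulVec_star hφ, mpow_ofReal_smul_one hc.ne', mul_smul_comm, mul_one, trR,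
    trace_smul, trace_vecMulVec, dotProduct_comm, hφ, smul_eq_mul, mul_one, Complex.ofReal_re,
    Real.log_rpow hc]
  field_simp [sub_ne_zero.mpr hlam]
  ring

end PureState

theorem trace_mul_one_kronecker {A B : Type*} [Fintype A] [Fintype B] [DecidableEq A]
    (M : Matrix (A × B) (A × B) ℂ) (σ : Matrix B B ℂ) :
    (M * ((1 : Matrix A A ℂ) ⊗ₖ σ)).trace = (ptrA M * σ).trace := by
  simp only [trace, diag_apply, mul_apply, kroneckerMap_apply, one_apply, ptrA, of_apply,
    Fintype.sum_prod_type, Finset.sum_mul, ite_mul, one_mul, zero_mul, mul_ite, mul_zero]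
  simp only [Finset.sum_ite_irrel, Finset.sum_const_zero, Finset.sum_ite_eq', Finset.mem_univ,
    if_true]
  rw [Finset.sum_comm]
  exact Finset.sum_congr rfl fun _ _ => Finset.sum_comm

section MaximallyEntangled

variable (ι : Type*) [Fintype ι] [DecidableEq ι]

noncomputable def maxEntangled : ι × ι → ℂ :=
  fun x => if x.1 = x.2 then ((Real.sqrt (Fintype.card ι))⁻¹ : ℝ) else 0

theorem maxEntangled_mul_star (a b a' b' : ι) :
    maxEntangled ι (a, b) * star (maxEntangled ι (a', b')) =
      if a = b ∧ a' = b' then (((Fintype.card ι : ℝ)⁻¹ : ℝ) : ℂ) else 0 := by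
  simp only [maxEntangled]
  split_ifs <;> simp_all [← Complex.ofReal_mul, ← mul_inv]

theorem star_maxEntangled_dotProduct [Nonempty ι] :
    star (maxEntangled ι) ⬝ᵥ maxEntangled ι = 1 := by
  simp_rw [dotProduct, Pi.star_apply, mul_comm (star _), Fintype.sum_prod_type,
    maxEntangled_mul_star]
  simp

theorem ptrA_maxEntangled :
    ptrA (vecMulVec (maxEntangled ι) (star (maxEntangled ι))) =
      (((Fintype.card ι : ℝ)⁻¹ : ℝ) : ℂ) • 1 := by
  ext b b'
  simp_rw [ptrA, of_apply, vecMulVec_apply, Pi.star_apply, maxEntangled_mul_star]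
  by_cases h : b = b'
  · subst h
    simp
  · rw [Matrix.smul_apply, one_apply_ne h, smul_zero]
    exact Finset.sum_eq_zero fun x _ => if_neg fun hx => h (hx.1.symm.trans hx.2)

theorem Kinf_maxEntangled [Nonempty ι] {lam : ℝ} (hlam : 1 < lam) :
    Kinf lam (vecMulVec (maxEntangled ι) (star (maxEntangled ι))) =
      Real.log (Fintype.card ι) := by
  have hunit := star_maxEntangled_dotProduct ι
  have hptr := ptrA_maxEntangled ι
  set ρ := vecMulVec (maxEntangled ι) (star (maxEntangled ι))
  have hd : (0 : ℝ) < Fintype.card ι := by exact_mod_cast Fintype.card_pos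
  set c : ℝ := (Fintype.card ι : ℝ)⁻¹
  have hc : 0 < c := inv_pos.2 hd
  have hlog : Real.log (Fintype.card ι) = -Real.log c := by rw [Real.log_inv, neg_neg]
  have hlower (σ : {σ : Matrix ι ι ℂ // σ.PosDef ∧ σ.trace = 1}) :
      Real.log (Fintype.card ι) ≤ renyiD lam ρ (1 ⊗ₖ σ.1) := by
    obtain ⟨σ, hσ, hσ1⟩ := σ
    have := neg_log_le_renyiD_vecMulVec_star hunit (PosDef.one.kronecker hσ) hlam
    rwa [trR, trace_mul_one_kronecker, hptr, smul_mul, one_mul, trace_smul, hσ1, smul_eq_mul,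
      mul_one, Complex.ofReal_re, ← hlog] at this
  let σ₀ : {σ : Matrix ι ι ℂ // σ.PosDef ∧ σ.trace = 1} :=
    ⟨(c : ℂ) • 1, PosDef.one.smul (by exact_mod_cast hc), by
      rw [trace_smul, trace_one, smul_eq_mul, ← Complex.ofReal_natCast, ← Complex.ofReal_mul,
        inv_mul_cancel₀ hd.ne', Complex.ofReal_one]⟩
  have hattained : renyiD lam ρ (1 ⊗ₖ σ₀.1) = Real.log (Fintype.card ι) := by
    rw [kronecker_smul, one_kronecker_one,
      renyiD_vecMulVec_star_ofReal_smul_one hunit hlam.ne' hc, hlog]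
  have : Nonempty {σ : Matrix ι ι ℂ // σ.PosDef ∧ σ.trace = 1} := ⟨σ₀⟩
  exact le_antisymm ((ciInf_le ⟨_, Set.forall_mem_range.2 hlower⟩ σ₀).trans_eq hattained)
    (le_ciInf hlower)

theorem trR_mpow_ptrA_mpow_maxEntangled [Nonempty ι] {lam : ℝ} (hlam : lam ≠ 0) :
    trR (mpow (ptrA (mpow (vecMulVec (maxEntangled ι) (star (maxEntangled ι))) lam))
      (1 / lam)) = (Fintype.card ι : ℝ) ^ ((lam - 1) / lam) := by
  have hd : (0 : ℝ) < Fintype.card ι := by exact_mod_cast Fintype.card_pos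
  rw [mpow_vecMulVec_star (star_maxEntangled_dotProduct ι), ptrA_maxEntangled,
    mpow_ofReal_smul_one (inv_pos.2 hd).ne', trR, trace_smul, trace_one, smul_eq_mul,
    ← Complex.ofReal_natCast, ← Complex.ofReal_mul, Complex.ofReal_re, Real.inv_rpow hd.le,
    ← Real.rpow_neg hd.le, ← Real.rpow_add_one hd.ne']
  congr 1
  field_simp
  ring

end MaximallyEntangled

/-- For the maximally entangled state of Schmidt rank `d`,
`K_λ(A⟩B) = ln d`, and `Tr[(Tr_A(|φ⟩⟨φ|^λ))^{1/λ}] = d^{(λ−1)/λ}`. -/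
theorem maximally_entangled_Kinf (d : ℕ) (hd : 1 ≤ d)
    (lam : ℝ) (hlam : 1 < lam)
    (φ : Fin d × Fin d → ℂ)
    (hφ : φ = fun x : Fin d × Fin d =>
      if x.1 = x.2 then (((Real.sqrt d)⁻¹ : ℝ) : ℂ) else 0) :
    Kinf lam (Matrix.vecMulVec φ (star φ)) = Real.log d ∧
      trR (mpow (ptrA (mpow (Matrix.vecMulVec φ (star φ)) lam)) (1 / lam)) =
        (d : ℝ) ^ ((lam - 1) / lam) := by
  have : Nonempty (Fin d) := ⟨⟨0, hd⟩⟩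
  obtain rfl : φ = maxEntangled (Fin d) := by
    subst hφ
    funext x
    simp [maxEntangled]
  have hK := Kinf_maxEntangled (Fin d) hlam
  have htr := trR_mpow_ptrA_mpow_maxEntangled (Fin d) (by linarith : lam ≠ 0)
  rw [Fintype.card_fin] at hK htr
  exact ⟨hK, htr⟩
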